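/- arXiv:2509.23527 — 4 statements merged into one kernel-verified Lean document; each statement's English description precedes it below -/
import Mathlib

section
/- Let C, c > 0 and let R : ℕ × ℕ → ℝ satisfy |R(t+s, t)| ≤ C e^{−cs} for all t ≥ 0 and all s ≥ 1, and suppose that for each s ≥ 1 the limit ρ(s) := lim_{t→∞} R(t+s, t) exists. Then |ρ(s)| ≤ C e^{−cs} for all s ≥ 1, the series Σ_{s=1}^∞ ρ(s) converges absolutely, and lim_{t→∞} Σ_{s=0}^{t−1} R(t, s) = Σ_{s=1}^∞ ρ(s). -/
/-!
Reindex the sum `∑_{s<t} R(t, s)` by the lag `t - s`: its term of lag `u + 1` is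
`R(t, t - (u + 1))`, which tends to `ρ(u + 1)` as `t → ∞` and is bounded uniformly in `t` by
the summable sequence `C e^{-c(u+1)}`. Dominated convergence for series (Tannery's theorem)
then gives the limit.
-/

open Filter Topology Finset

section Lag

variable {E : Type*} [NormedAddCommGroup E]

def lagTerm (R : ℕ → ℕ → E) (t u : ℕ) : E :=
  if u < t then R t (t - (u + 1)) else 0

theorem sum_range_eq_tsum_lagTerm (R : ℕ → ℕ → E) (t : ℕ) :
    ∑ s ∈ range t, R t s = ∑' u, lagTerm R t u := by
  rw [tsum_eq_sum (s := range t) fun u hu => by rw [lagTerm, if_neg (mt mem_range.mpr hu)],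
    ← sum_range_reflect]
  refine sum_congr rfl fun u hu => ?_
  rw [lagTerm, if_pos (mem_range.mp hu), Nat.sub_sub, Nat.add_comm 1 u]

theorem tendsto_lagTerm {R : ℕ → ℕ → E} {l : E} {u : ℕ}
    (hlim : Tendsto (fun t => R (t + (u + 1)) t) atTop (𝓝 l)) :
    Tendsto (fun t => lagTerm R t u) atTop (𝓝 l) := by
  refine (hlim.comp (tendsto_sub_atTop_nat (u + 1))).congr' ?_
  filter_upwards [eventually_gt_atTop u] with t ht
  simp only [Function.comp_apply, lagTerm, if_pos ht, Nat.sub_add_cancel ht]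

theorem norm_lagTerm_le {R : ℕ → ℕ → E} {b : ℕ → ℝ}
    (hbound : ∀ t u, ‖R (t + (u + 1)) t‖ ≤ b u) (t u : ℕ) :
    ‖lagTerm R t u‖ ≤ b u := by
  unfold lagTerm
  split_ifs with hu
  · simpa only [Nat.sub_add_cancel hu] using hbound (t - (u + 1)) u
  · simpa only [norm_zero] using (norm_nonneg _).trans (hbound 0 u)

theorem tendsto_sum_range_of_lag_dominated [CompleteSpace E] {R : ℕ → ℕ → E} {ρ : ℕ → E}
    {b : ℕ → ℝ} (hb : Summable b) (hbound : ∀ t u, ‖R (t + (u + 1)) t‖ ≤ b u)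
    (hlim : ∀ u, Tendsto (fun t => R (t + (u + 1)) t) atTop (𝓝 (ρ u))) :
    Tendsto (fun t => ∑ s ∈ range t, R t s) atTop (𝓝 (∑' u, ρ u)) := by
  simp only [sum_range_eq_tsum_lagTerm]
  exact tendsto_tsum_of_dominated_convergence hb (fun u => tendsto_lagTerm (hlim u))
    (Eventually.of_forall (norm_lagTerm_le hbound))

end Lag

theorem Real.summable_mul_exp_neg_mul_natCast_succ (C : ℝ) {c : ℝ} (hc : 0 < c) :
    Summable fun u : ℕ => C * Real.exp (-c * ↑(u + 1)) := by
  have hexp : Summable fun n : ℕ => Real.exp (-c * n) := by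
    simpa only [mul_comm (-c)] using Real.summable_exp_nat_mul_iff.mpr (neg_neg_of_pos hc)
  exact ((summable_nat_add_iff 1).mpr hexp).mul_left C

theorem stmt4_general (C c : ℝ) (hc : 0 < c) (R : ℕ → ℕ → ℝ) (ρ : ℕ → ℝ)
    (hbound : ∀ t s : ℕ, 1 ≤ s → |R (t + s) t| ≤ C * Real.exp (-c * s))
    (hlim : ∀ s : ℕ, 1 ≤ s →
      Filter.Tendsto (fun t => R (t + s) t) Filter.atTop (nhds (ρ s))) :
    (∀ s : ℕ, 1 ≤ s → |ρ s| ≤ C * Real.exp (-c * s)) ∧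
      Summable (fun s : ℕ => |ρ (s + 1)|) ∧
      Filter.Tendsto (fun t => ∑ s ∈ Finset.range t, R t s) Filter.atTop
        (nhds (∑' s : ℕ, ρ (s + 1))) := by
  have hρ : ∀ s : ℕ, 1 ≤ s → |ρ s| ≤ C * Real.exp (-c * s) := fun s hs =>
    le_of_tendsto (hlim s hs).abs (Eventually.of_forall fun t => hbound t s hs)
  have hb := Real.summable_mul_exp_neg_mul_natCast_succ C hc
  refine ⟨hρ, hb.of_nonneg_of_le (fun _ => abs_nonneg _) fun u => hρ (u + 1) u.succ_pos, ?_⟩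
  exact tendsto_sum_range_of_lag_dominated hb (fun t u => hbound t (u + 1) u.succ_pos)
    fun u => hlim (u + 1) u.succ_pos

theorem stmt4 (C c : ℝ) (hC : 0 < C) (hc : 0 < c) (R : ℕ → ℕ → ℝ) (ρ : ℕ → ℝ)
    (hbound : ∀ t s : ℕ, 1 ≤ s → |R (t + s) t| ≤ C * Real.exp (-c * s))
    (hlim : ∀ s : ℕ, 1 ≤ s →
      Filter.Tendsto (fun t => R (t + s) t) Filter.atTop (nhds (ρ s))) :
    (∀ s : ℕ, 1 ≤ s → |ρ s| ≤ C * Real.exp (-c * s)) ∧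
      Summable (fun s : ℕ => |ρ (s + 1)|) ∧
      Filter.Tendsto (fun t => ∑ s ∈ Finset.range t, R t s) Filter.atTop
        (nhds (∑' s : ℕ, ρ (s + 1))) :=
  stmt4_general C c hc R ρ hbound hlim
end

section
/- Let E be a Banach space, let C, c > 0, let x∞ ∈ E and let (x_t)_{t≥0} be a sequence in E with ‖x_t − x∞‖ ≤ C e^{−ct} for all t ≥ 0. Let R : ℕ × ℕ → ℝ satisfy |R(t+s, t)| ≤ C e^{−cs} for all t ≥ 0 and s ≥ 1, and suppose that Σ_{s=0}^{t−1} R(t, s) converges to a real number ρ* as t → ∞. Then Σ_{s=0}^{t−1} R(t, s)·x_s converges to ρ*·x∞ in E as t → ∞. -/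
open Filter Finset Topology

/-!
Writing `x s = x∞ + (x s - x∞)`, the weighted sum splits as `(∑ R t s) • x∞` plus an error
term. In the error term the two exponential decays combine, `e^{-c(t-s)} e^{-cs} = e^{-ct}`, so
each of its `t` summands is at most `A B e^{-ct}`, and `t e^{-ct} → 0`.
-/

lemma tendsto_natCast_mul_exp_neg_mul_atTop {c : ℝ} (hc : 0 < c) :
    Tendsto (fun t : ℕ => (t : ℝ) * Real.exp (-c * t)) atTop (𝓝 0) := by
  have hr : Real.exp (-c) < 1 := Real.exp_lt_one_iff.mpr (neg_neg_of_pos hc)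
  refine (tendsto_self_mul_const_pow_of_lt_one (Real.exp_pos _).le hr).congr fun t => ?_
  rw [← Real.exp_nat_mul]
  ring_nf

lemma norm_sum_range_smul_sub_le {E : Type*} [NormedAddCommGroup E] [NormedSpace ℝ E]
    {A B c : ℝ} {xinf : E} {x : ℕ → E} {R : ℕ → ℕ → ℝ}
    (hx : ∀ t : ℕ, ‖x t - xinf‖ ≤ B * Real.exp (-c * t))
    (hR : ∀ t s : ℕ, 1 ≤ s → |R (t + s) t| ≤ A * Real.exp (-c * s)) (t : ℕ) :
    ‖∑ s ∈ range t, R t s • (x s - xinf)‖ ≤ A * B * t * Real.exp (-c * t) := by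
  have hterm : ∀ s ∈ range t, ‖R t s • (x s - xinf)‖ ≤ A * B * Real.exp (-c * t) := by
    intro s hs
    have hst : s ≤ t := (mem_range.mp hs).le
    have hRts : |R t s| ≤ A * Real.exp (-c * (t - s : ℕ)) := by
      simpa only [Nat.add_sub_cancel' hst] using hR s (t - s) (by grind)
    calc ‖R t s • (x s - xinf)‖ = |R t s| * ‖x s - xinf‖ := norm_smul _ _
      _ ≤ A * Real.exp (-c * (t - s : ℕ)) * (B * Real.exp (-c * s)) :=
        mul_le_mul hRts (hx s) (norm_nonneg _) ((abs_nonneg _).trans hRts)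
      _ = A * B * Real.exp (-c * t) := by
        rw [Nat.cast_sub hst, mul_mul_mul_comm, ← Real.exp_add]
        ring_nf
  calc ‖∑ s ∈ range t, R t s • (x s - xinf)‖
      ≤ ∑ s ∈ range t, ‖R t s • (x s - xinf)‖ := norm_sum_le _ _
    _ ≤ ∑ _s ∈ range t, A * B * Real.exp (-c * t) := sum_le_sum hterm
    _ = A * B * t * Real.exp (-c * t) := by
      rw [sum_const, card_range, nsmul_eq_mul]
      ring

theorem stmt5_general {E : Type*} [NormedAddCommGroup E] [NormedSpace ℝ E]
    (C c : ℝ) (hc : 0 < c) (xinf : E) (x : ℕ → E)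
    (hx : ∀ t : ℕ, ‖x t - xinf‖ ≤ C * Real.exp (-c * t))
    (R : ℕ → ℕ → ℝ)
    (hR : ∀ t s : ℕ, 1 ≤ s → |R (t + s) t| ≤ C * Real.exp (-c * s))
    (ρstar : ℝ)
    (hρ : Filter.Tendsto (fun t => ∑ s ∈ Finset.range t, R t s) Filter.atTop (nhds ρstar)) :
    Filter.Tendsto (fun t => ∑ s ∈ Finset.range t, R t s • x s) Filter.atTop
      (nhds (ρstar • xinf)) := by
  have herror : Tendsto (fun t => ∑ s ∈ range t, R t s • (x s - xinf)) atTop (𝓝 0) := by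
    refine squeeze_zero_norm (norm_sum_range_smul_sub_le hx hR) ?_
    simpa only [mul_assoc, mul_zero] using
      (tendsto_natCast_mul_exp_neg_mul_atTop hc).const_mul (C * C)
  have hsplit : ∀ t, ∑ s ∈ range t, R t s • x s =
      ∑ s ∈ range t, R t s • (x s - xinf) + (∑ s ∈ range t, R t s) • xinf := by
    intro t
    simp only [smul_sub, sum_sub_distrib, sum_smul, sub_add_cancel]
  simpa only [hsplit, zero_add] using herror.add (hρ.smul_const xinf)

theorem stmt5 {E : Type*} [NormedAddCommGroup E] [NormedSpace ℝ E] [CompleteSpace E]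
    (C c : ℝ) (hC : 0 < C) (hc : 0 < c) (xinf : E) (x : ℕ → E)
    (hx : ∀ t : ℕ, ‖x t - xinf‖ ≤ C * Real.exp (-c * t))
    (R : ℕ → ℕ → ℝ)
    (hR : ∀ t s : ℕ, 1 ≤ s → |R (t + s) t| ≤ C * Real.exp (-c * s))
    (ρstar : ℝ)
    (hρ : Filter.Tendsto (fun t => ∑ s ∈ Finset.range t, R t s) Filter.atTop (nhds ρstar)) :
    Filter.Tendsto (fun t => ∑ s ∈ Finset.range t, R t s • x s) Filter.atTop
      (nhds (ρstar • xinf)) :=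
  stmt5_general C c hc xinf x hx R hR ρstar hρ
end

section
/- Let X be a real n×d matrix, η*, z ∈ ℝ^n, γ, λ ∈ ℝ, and let ℓ : ℝ³ → ℝ be such that a ↦ ℓ(a,b,c) is differentiable for every (b,c), with derivative ∂₁ℓ. Fix s ∈ ℕ, j ∈ {1,…,d}, θ_init ∈ ℝ^d, and for each ε ∈ ℝ define the sequence (θ^{t,ε})_{t≥0} in ℝ^d by θ^{0,ε} = θ_init and θ^{t+1,ε} = θ^{t,ε} − γ( Xᵀ ℓ(Xθ^{t,ε}, η*, z) + λ θ^{t,ε} ) + γ ε 1{t = s} e_j, where e_j is the j-th standard basis vector. Write θ^t := θ^{t,0}, D^k := diag( ∂₁ℓ((Xθ^k)_i, η*_i, z_i) )_{i=1}^n and Ω^k := (1−γλ) I_d − γ Xᵀ D^k X. Then for every t ≥ s+1, the map ε ↦ θ^{t,ε} is differentiable at ε = 0 with derivative γ · Ω^{t−1} Ω^{t−2} ⋯ Ω^{s+1} e_j, where the empty product (for t = s+1) is I_d. -/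
/-!
Before step `s` the perturbation is switched off, so `θ^{t,ε} = θ^t` for `t ≤ s` and
`ε ↦ θ^{s+1,ε}` is affine with slope `γ e_j`. Afterwards every step applies the gradient map
`G θ = θ - γ (Xᵀ ℓ(Xθ, η*, z) + λθ)`, whose Jacobian at `θ^t` is `Ω^t`, so by the chain rule
each step multiplies the derivative on the left by `Ω^t`.
-/

open Matrix WithLp

theorem hasFDerivAt_toLp_pointwise {m : Type*} [Fintype m] [DecidableEq m]
    {φ : m → ℝ → ℝ} {φ' : m → ℝ} {v : EuclideanSpace ℝ m}
    (hφ : ∀ i, HasDerivAt (φ i) (φ' i) (v i)) :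
    HasFDerivAt (fun w : EuclideanSpace ℝ m => toLp 2 fun i => φ i (w i))
      (toEuclideanLin (diagonal φ')).toContinuousLinearMap v := by
  rw [← hasFDerivWithinAt_univ, hasFDerivWithinAt_piLp]
  intro i
  rw [hasFDerivWithinAt_univ]
  refine ((hφ i).hasFDerivAt.comp v (PiLp.hasFDerivAt_apply 2 v i)).congr_fderiv ?_
  ext w
  simp [toLpLin_apply, mulVec_diagonal, mul_comm]

section GradientDescent

variable {m ι : Type*} [Fintype m] [DecidableEq m] [Fintype ι] [DecidableEq ι]
  (X : Matrix m ι ℝ) (ηs z : m → ℝ) (γ lam : ℝ)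

noncomputable def gdStep (ℓ : ℝ → ℝ → ℝ → ℝ) (θ : EuclideanSpace ℝ ι) : EuclideanSpace ℝ ι :=
  θ - γ • (toEuclideanLin Xᵀ (toLp 2 fun i => ℓ (toEuclideanLin X θ i) (ηs i) (z i)) + lam • θ)

noncomputable def gdJacobian (dℓ : ℝ → ℝ → ℝ → ℝ) (θ : EuclideanSpace ℝ ι) : Matrix ι ι ℝ :=
  (1 - γ * lam) • 1 - γ • (Xᵀ * diagonal (fun i => dℓ (toEuclideanLin X θ i) (ηs i) (z i)) * X)

theorem hasFDerivAt_gdStep {ℓ dℓ : ℝ → ℝ → ℝ → ℝ}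
    (hdiff : ∀ a b c : ℝ, HasDerivAt (fun a' => ℓ a' b c) (dℓ a b c) a) (θ : EuclideanSpace ℝ ι) :
    HasFDerivAt (gdStep X ηs z γ lam ℓ)
      (toEuclideanLin (gdJacobian X ηs z γ lam dℓ θ)).toContinuousLinearMap θ := by
  have hloss := (hasFDerivAt_toLp_pointwise fun i => hdiff _ (ηs i) (z i)).comp θ
    (toEuclideanLin X).toContinuousLinearMap.hasFDerivAt
  have hgrad := (toEuclideanLin Xᵀ).toContinuousLinearMap.hasFDerivAt.comp θ hloss
  refine ((hasFDerivAt_id θ).sub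
    ((hgrad.add ((hasFDerivAt_id θ).const_smul lam)).const_smul γ)).congr_fderiv ?_
  ext w
  simp [gdJacobian, sub_smul, Matrix.mul_assoc]
  ring

end GradientDescent

section PerturbedOrbit

variable {E : Type*} [NormedAddCommGroup E] [NormedSpace ℝ E] {G : E → E} {c : ℝ} {s : ℕ}
  {e : E} {θ : ℝ → ℕ → E}
  (hrec : ∀ ε t, θ ε (t + 1) = G (θ ε t) + (c * ε * if t = s then 1 else 0) • e)
include hrec

theorem perturbedOrbit_eq_of_le {θinit : E} (hinit : ∀ ε, θ ε 0 = θinit) (ε : ℝ) :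
    ∀ t ≤ s, θ ε t = θ 0 t
  | 0, _ => by rw [hinit, hinit]
  | t + 1, ht => by
    rw [hrec, hrec, perturbedOrbit_eq_of_le hinit ε t (by omega), if_neg (by omega)]
    simp

theorem hasDerivAt_perturbedOrbit_succ_self {θinit : E} (hinit : ∀ ε, θ ε 0 = θinit) :
    HasDerivAt (fun ε => θ ε (s + 1)) (c • e) 0 := by
  have hθ : (fun ε => θ ε (s + 1)) = fun ε => G (θ 0 s) + (c * ε) • e := by
    funext ε
    rw [hrec, perturbedOrbit_eq_of_le hrec hinit ε s le_rfl, if_pos rfl, mul_one]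
  rw [hθ]
  have hline := (((hasDerivAt_id (0 : ℝ)).const_mul c).smul_const e).const_add (G (θ 0 s))
  simpa using hline

theorem hasDerivAt_perturbedOrbit_succ {G' : E →L[ℝ] E} {t : ℕ} (ht : t ≠ s)
    (hG : HasFDerivAt G G' (θ 0 t)) {v : E} (hv : HasDerivAt (fun ε => θ ε t) v 0) :
    HasDerivAt (fun ε => θ ε (t + 1)) (G' v) 0 := by
  have hθ : (fun ε => θ ε (t + 1)) = fun ε => G (θ ε t) := by
    funext ε
    rw [hrec, if_neg ht]
    simp
  rw [hθ]
  exact hG.comp_hasDerivAt 0 hv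

end PerturbedOrbit

section

variable {M : Type*} [Monoid M] (A : ℕ → M) (s : ℕ)

/-- `A (t - 1) * A (t - 2) * ⋯ * A (s + 1)`. -/
def revProdIoo (t : ℕ) : M :=
  ((List.range (t - 1 - s)).map fun k => A (t - 1 - k)).prod

@[simp]
theorem revProdIoo_self_succ : revProdIoo A s (s + 1) = 1 := by
  simp [revProdIoo]

theorem revProdIoo_succ {t : ℕ} (h : s < t) :
    revProdIoo A s (t + 1) = A t * revProdIoo A s t := by
  unfold revProdIoo
  rw [show t + 1 - 1 - s = t - 1 - s + 1 by omega, List.prod_range_succ']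
  congr 3 with k
  exact congrArg A (by omega)

end

theorem stmt12 (n d : ℕ) (X : Matrix (Fin n) (Fin d) ℝ)
    (ηs z : Fin n → ℝ) (γ lam : ℝ)
    (ℓ dℓ : ℝ → ℝ → ℝ → ℝ)
    (hdiff : ∀ a b c : ℝ, HasDerivAt (fun a' => ℓ a' b c) (dℓ a b c) a)
    (s : ℕ) (j : Fin d) (θinit : EuclideanSpace ℝ (Fin d))
    (θ : ℝ → ℕ → EuclideanSpace ℝ (Fin d))
    (hinit : ∀ ε : ℝ, θ ε 0 = θinit)
    (hrec : ∀ (ε : ℝ) (t : ℕ), θ ε (t + 1) =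
      θ ε t -
        γ • (Matrix.toEuclideanLin Xᵀ
              (WithLp.toLp 2 (fun i => ℓ (Matrix.toEuclideanLin X (θ ε t) i) (ηs i) (z i))) +
            lam • θ ε t) +
        (γ * ε * (if t = s then 1 else 0)) • EuclideanSpace.single j 1) :
    ∀ t : ℕ, s + 1 ≤ t →
      HasDerivAt (fun ε => θ ε t)
        (γ •
          Matrix.toEuclideanLin
            (((List.range (t - 1 - s)).map (fun k =>
              (1 - γ * lam) • (1 : Matrix (Fin d) (Fin d) ℝ) -
                γ • (Xᵀ * Matrix.diagonal (fun i =>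
                    dℓ (Matrix.toEuclideanLin X (θ 0 (t - 1 - k)) i) (ηs i) (z i)) * X))).prod)
            (EuclideanSpace.single j 1))
        0 := by
  have hstep : ∀ ε t, θ ε (t + 1) = gdStep X ηs z γ lam ℓ (θ ε t) +
      (γ * ε * if t = s then 1 else 0) • EuclideanSpace.single j 1 := hrec
  intro t ht
  change HasDerivAt _ (γ • toEuclideanLin
    (revProdIoo (fun k => gdJacobian X ηs z γ lam dℓ (θ 0 k)) s t) (EuclideanSpace.single j 1)) 0
  induction t, ht using Nat.le_induction with
  | base => simpa using hasDerivAt_perturbedOrbit_succ_self hstep hinit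
  | succ t ht ih =>
    rw [revProdIoo_succ _ _ ht, toLpLin_mul_same, LinearMap.comp_apply, ← map_smul]
    exact hasDerivAt_perturbedOrbit_succ hstep (by omega)
      (hasFDerivAt_gdStep X ηs z γ lam hdiff _) ih
end

section
/- Let (Ω, F, P) be a probability space and let w*, z, y, w⁰, (η^t)_{t≥0}, (w^t)_{t≥0} be real random variables in L²(P). Let ℓ : ℝ³ → ℝ be Lipschitz and 𝒯 : ℝ → ℝ bounded and measurable, and let R_θ(t,s) (t > s ≥ 0) and R_♦(t) (t ≥ 0) be real numbers. Suppose: (i) for every t ≥ 0, η^t = −Σ_{s=0}^{t−1} ℓ(η^s, w*, z)·R_θ(t,s) + 𝒯(y)·w⁰·R_♦(t) + w^t almost surely; (ii) there exist η^∞, w^∞ ∈ L²(P) and constants C, c > 0 with ‖η^t − η^∞‖_{L²} ≤ C e^{−ct} and ‖w^t − w^∞‖_{L²} ≤ C e^{−ct} for all t; (iii) R_♦(t) → 0 as t → ∞; (iv) |R_θ(t+s, t)| ≤ C e^{−cs} for all t ≥ 0, s ≥ 1, and for each s ≥ 1 the limit R(s) := lim_{t→∞} R_θ(t+s, t) exists.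 Then the series R^∞ := Σ_{s=1}^∞ R(s) converges absolutely and η^∞ = −R^∞ · ℓ(η^∞, w*, z) + w^∞ almost surely. -/
open MeasureTheory Filter
open scoped ENNReal NNReal

/-!
Work in the Banach space `L²(P)`. Since `ℓ` is Lipschitz, `ℓ(ηˢ, w*, z) → ℓ(η^∞, w*, z)` in `L²`.
Reindexing the memory term by the lag `k = t - s`, the coefficients `R_θ(t, t - k)` are dominated
by the summable sequence `C e^{-ck}` and converge to `R(k)`, so by dominated convergence for series
the memory term converges to `R^∞ ℓ(η^∞, w*, z)`; the term with `R_♦(t) → 0` vanishes. Passing to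
the limit in the recursion, identified in `L²`, gives the fixed-point equation.
-/

open Topology Finset

theorem summable_mul_exp_neg_mul_nat (C : ℝ) {c : ℝ} (hc : 0 < c) :
    Summable fun k : ℕ => C * Real.exp (-c * k) :=
  ((Real.summable_exp_nat_mul_iff.mpr (neg_lt_zero.mpr hc)).mul_left C).congr fun k => by
    rw [mul_comm (k : ℝ)]

theorem ENNReal.tendsto_zero_of_le_ofReal_mul_exp {e : ℕ → ℝ≥0∞} {C c : ℝ} (hc : 0 < c)
    (he : ∀ t : ℕ, e t ≤ ENNReal.ofReal (C * Real.exp (-c * t))) :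
    Tendsto e atTop (𝓝 0) := by
  have hlim := ENNReal.tendsto_ofReal (summable_mul_exp_neg_mul_nat C hc).tendsto_atTop_zero
  rw [ENNReal.ofReal_zero] at hlim
  exact tendsto_of_tendsto_of_tendsto_of_le_of_le tendsto_const_nhds hlim (fun _ => zero_le) he

theorem summable_abs_of_tendsto_kernel {a : ℕ → ℕ → ℝ} {A b : ℕ → ℝ} (hb : Summable b)
    (hbound : ∀ t k, 1 ≤ k → |a (t + k) t| ≤ b k)
    (hlim : ∀ k, 1 ≤ k → Tendsto (fun t => a (t + k) t) atTop (𝓝 (A k))) :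
    Summable fun k => |A (k + 1)| :=
  ((summable_nat_add_iff 1).mpr hb).of_nonneg_of_le (fun _ => abs_nonneg _) fun k =>
    le_of_tendsto' (hlim (k + 1) k.succ_pos).abs fun t => hbound t (k + 1) k.succ_pos

theorem tendsto_sum_range_kernel_smul {E : Type*} [NormedAddCommGroup E] [NormedSpace ℝ E]
    [CompleteSpace E] {a : ℕ → ℕ → ℝ} {A b : ℕ → ℝ} (hb : Summable b)
    (hbound : ∀ t k, 1 ≤ k → |a (t + k) t| ≤ b k)
    (hlim : ∀ k, 1 ≤ k → Tendsto (fun t => a (t + k) t) atTop (𝓝 (A k)))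
    {x : ℕ → E} {x₀ : E} (hx : Tendsto x atTop (𝓝 x₀)) :
    Tendsto (fun t => ∑ s ∈ range t, a t s • x s) atTop (𝓝 ((∑' k, A (k + 1)) • x₀)) := by
  obtain ⟨M, hM⟩ : ∃ M, ∀ s, ‖x s‖ ≤ M :=
    (isBounded_iff_forall_norm_le.mp (Metric.isBounded_range_of_tendsto x hx)).imp
      fun M h s => h _ (Set.mem_range_self s)
  -- reindex by the lag `k + 1 = t - s`, padding with zeros to get a series in `k`
  set F : ℕ → ℕ → E := fun t k => if k < t then a t (t - 1 - k) • x (t - 1 - k) else 0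
  have hF : ∀ t, ∑ s ∈ range t, a t s • x s = ∑' k, F t k := fun t => by
    rw [tsum_eq_sum (s := range t) fun k hk => if_neg (by simpa using hk),
      ← sum_range_reflect]
    exact sum_congr rfl fun k hk => (if_pos (mem_range.mp hk)).symm
  have hFlim : ∀ k, Tendsto (F · k) atTop (𝓝 (A (k + 1) • x₀)) := fun k => by
    have h := ((hlim (k + 1) k.succ_pos).smul hx).comp (tendsto_sub_atTop_nat (k + 1))
    refine h.congr' ?_
    filter_upwards [eventually_gt_atTop k] with t ht
    simp only [Function.comp_apply, F, if_pos ht, Nat.sub_add_cancel ht, Nat.sub_sub,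
      add_comm 1 k]
  have hFbound : ∀ t k, ‖F t k‖ ≤ b (k + 1) * M := fun t k => by
    by_cases ht : k < t
    · have hlag := hbound (t - 1 - k) (k + 1) k.succ_pos
      rw [show t - 1 - k + (k + 1) = t by omega] at hlag
      simp only [F, if_pos ht, norm_smul, Real.norm_eq_abs]
      exact mul_le_mul hlag (hM _) (norm_nonneg _) ((abs_nonneg _).trans hlag)
    · simp only [F, if_neg ht, norm_zero]
      exact mul_nonneg ((abs_nonneg _).trans (hbound 0 (k + 1) k.succ_pos))
        ((norm_nonneg _).trans (hM 0))
  rw [← (summable_abs_of_tendsto_kernel hb hbound hlim).of_abs.tsum_smul_const]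
  simpa only [hF] using tendsto_tsum_of_dominated_convergence
    (((summable_nat_add_iff 1).mpr hb).mul_right M) hFlim (Eventually.of_forall hFbound)

theorem limit_eq_of_convolution_recursion {E : Type*} [NormedAddCommGroup E] [NormedSpace ℝ E]
    [CompleteSpace E] {a : ℕ → ℕ → ℝ} {A b d : ℕ → ℝ} (hb : Summable b)
    (hbound : ∀ t k, 1 ≤ k → |a (t + k) t| ≤ b k)
    (hlim : ∀ k, 1 ≤ k → Tendsto (fun t => a (t + k) t) atTop (𝓝 (A k)))
    (hd : Tendsto d atTop (𝓝 0)) {X L W : ℕ → E} {X₀ L₀ W₀ U : E}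
    (hX : Tendsto X atTop (𝓝 X₀)) (hL : Tendsto L atTop (𝓝 L₀)) (hW : Tendsto W atTop (𝓝 W₀))
    (hrec : ∀ t, X t = -(∑ s ∈ range t, a t s • L s) + d t • U + W t) :
    X₀ = -((∑' k, A (k + 1)) • L₀) + W₀ := by
  have hlimit := ((tendsto_sum_range_kernel_smul hb hbound hlim hL).neg.add
    (hd.smul_const U)).add hW
  rw [zero_smul, add_zero] at hlimit
  exact tendsto_nhds_unique hX (hlimit.congr fun t => (hrec t).symm)

namespace MeasureTheory

variable {α E F : Type*} [MeasurableSpace α] {μ : Measure α} {p : ℝ≥0∞}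
  [NormedAddCommGroup E] [NormedAddCommGroup F] {K : ℝ≥0}

theorem _root_.LipschitzWith.comp_memLp_of_isFiniteMeasure [IsFiniteMeasure μ] {f : α → E}
    {g : E → F} (hg : LipschitzWith K g) (hf : MemLp f p μ) : MemLp (g ∘ f) p μ := by
  have h : MemLp (fun x => g (f x) - g 0) p μ :=
    (hg.vsub (LipschitzWith.const (g 0))).comp_memLp (by simp) hf
  convert h.add (memLp_const (g 0)) using 1
  ext x
  simp

theorem eLpNorm_sub_le_of_lipschitzWith {g : α → E → F} (hg : ∀ x, LipschitzWith K (g x))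
    (u v : α → E) :
    eLpNorm (fun x => g x (u x) - g x (v x)) p μ ≤ K * eLpNorm (u - v) p μ :=
  eLpNorm_le_nnreal_smul_eLpNorm_of_ae_le_mul
    (Eventually.of_forall fun x => by
      simpa only [Pi.sub_apply, ← nndist_eq_nnnorm] using (hg x).nndist_le (u x) (v x)) p

theorem tendsto_toLp_comp_of_lipschitzWith [Fact (1 ≤ p)] {g : α → E → F}
    (hg : ∀ x, LipschitzWith K (g x)) {u : ℕ → α → E} {u₀ : α → E}
    (hgu : ∀ s, MemLp (fun x => g x (u s x)) p μ) (hgu₀ : MemLp (fun x => g x (u₀ x)) p μ)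
    (hu : Tendsto (fun s => eLpNorm (u s - u₀) p μ) atTop (𝓝 0)) :
    Tendsto (fun s => (hgu s).toLp _) atTop (𝓝 (hgu₀.toLp _)) := by
  refine (Lp.tendsto_Lp_iff_tendsto_eLpNorm'' _ _ _ _).mpr ?_
  have hK := ENNReal.Tendsto.const_mul hu (Or.inr (ENNReal.coe_ne_top (r := K)))
  rw [mul_zero] at hK
  exact tendsto_of_tendsto_of_tendsto_of_le_of_le tendsto_const_nhds hK (fun _ => zero_le)
    fun s => eLpNorm_sub_le_of_lipschitzWith hg _ _

theorem MemLp.toLp_finsetSum {ι : Type*} (s : Finset ι) {g : ι → α → E}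
    (hg : ∀ i, MemLp (g i) p μ) :
    (memLp_finsetSum' s fun i _ => hg i).toLp (∑ i ∈ s, g i) = ∑ i ∈ s, (hg i).toLp (g i) := by
  classical
  induction s using Finset.induction_on with
  | empty => rfl
  | insert i s hi ih =>
    simp only [Finset.sum_insert hi, ← ih]
    rfl

end MeasureTheory

theorem stmt17_general {Ω : Type*} [MeasurableSpace Ω] (P : Measure Ω) [IsProbabilityMeasure P]
    (wstar z y w0 : Ω → ℝ) (η w : ℕ → Ω → ℝ)
    (hwstar : MemLp wstar 2 P) (hz : MemLp z 2 P) (hy : MemLp y 2 P)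
    (hw0 : MemLp w0 2 P) (hη : ∀ t, MemLp (η t) 2 P) (hw : ∀ t, MemLp (w t) 2 P)
    (ℓ : ℝ → ℝ → ℝ → ℝ) (K : ℝ≥0)
    (hℓ : LipschitzWith K (fun p : ℝ × ℝ × ℝ => ℓ p.1 p.2.1 p.2.2))
    (𝒯 : ℝ → ℝ) (h𝒯m : Measurable 𝒯) (B : ℝ) (h𝒯b : ∀ x, |𝒯 x| ≤ B)
    (Rθ : ℕ → ℕ → ℝ) (Rd : ℕ → ℝ)
    (heq : ∀ t : ℕ, ∀ᵐ ω ∂P,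
      η t ω = -(∑ s ∈ Finset.range t, ℓ (η s ω) (wstar ω) (z ω) * Rθ t s)
        + 𝒯 (y ω) * w0 ω * Rd t + w t ω)
    (ηinf winf : Ω → ℝ) (hηinf : MemLp ηinf 2 P) (hwinf : MemLp winf 2 P)
    (C c : ℝ) (hc : 0 < c)
    (hηconv : ∀ t : ℕ, eLpNorm (fun ω => η t ω - ηinf ω) 2 P
      ≤ ENNReal.ofReal (C * Real.exp (-c * t)))
    (hwconv : ∀ t : ℕ, eLpNorm (fun ω => w t ω - winf ω) 2 P
      ≤ ENNReal.ofReal (C * Real.exp (-c * t)))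
    (hRd : Tendsto Rd atTop (nhds 0))
    (hRθbound : ∀ t s : ℕ, 1 ≤ s → |Rθ (t + s) t| ≤ C * Real.exp (-c * s))
    (Rlim : ℕ → ℝ)
    (hRθlim : ∀ s : ℕ, 1 ≤ s →
      Tendsto (fun t => Rθ (t + s) t) atTop (nhds (Rlim s))) :
    Summable (fun s : ℕ => |Rlim (s + 1)|) ∧
      ∀ᵐ ω ∂P, ηinf ω
        = -(∑' s : ℕ, Rlim (s + 1)) * ℓ (ηinf ω) (wstar ω) (z ω) + winf ω := by
  have hb := summable_mul_exp_neg_mul_nat C hc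
  refine ⟨summable_abs_of_tendsto_kernel hb hRθbound hRθlim, ?_⟩
  have hlip : ∀ ω, LipschitzWith K fun x => ℓ x (wstar ω) (z ω) := fun ω => by
    simpa [Function.comp_def] using hℓ.comp (LipschitzWith.prodMk_right (wstar ω, z ω))
  have hloss : ∀ {u : Ω → ℝ}, MemLp u 2 P → MemLp (fun ω => ℓ (u ω) (wstar ω) (z ω)) 2 P :=
    fun {u} hu => hℓ.comp_memLp_of_isFiniteMeasure (f := fun ω => (u ω, wstar ω, z ω))
      (memLp_prod_iff.2 ⟨hu, memLp_prod_iff.2 ⟨hwstar, hz⟩⟩)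
  have hu : MemLp (fun ω => 𝒯 (y ω) * w0 ω) 2 P :=
    hw0.mul' (memLp_top_of_bound (h𝒯m.comp_aemeasurable hy.aemeasurable).aestronglyMeasurable
      B (Eventually.of_forall fun ω => h𝒯b (y ω)))
  set L : ℕ → Lp ℝ 2 P := fun s => (hloss (hη s)).toLp _
  have hrec : ∀ t, (hη t).toLp (η t)
      = -(∑ s ∈ range t, Rθ t s • L s) + Rd t • hu.toLp _ + (hw t).toLp (w t) := by
    intro t
    -- `MemLp.toLp_const_smul` holds by `rfl`, so the summands agree definitionally
    have hsum : ∑ s ∈ range t, Rθ t s • L s = (memLp_finsetSum' (range t) fun s _ =>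
        (hloss (hη s)).const_smul (Rθ t s)).toLp _ :=
      (MemLp.toLp_finsetSum _ fun s => (hloss (hη s)).const_smul (Rθ t s)).symm
    rw [hsum, ← MemLp.toLp_neg, ← MemLp.toLp_const_smul, ← MemLp.toLp_add, ← MemLp.toLp_add,
      MemLp.toLp_eq_toLp_iff]
    filter_upwards [heq t] with ω hω
    simp [hω, Finset.sum_apply, mul_comm]
  have hηL2 := ENNReal.tendsto_zero_of_le_ofReal_mul_exp hc hηconv
  have hwL2 := ENNReal.tendsto_zero_of_le_ofReal_mul_exp hc hwconv
  have hfix := limit_eq_of_convolution_recursion hb hRθbound hRθlim hRd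
    ((Lp.tendsto_Lp_iff_tendsto_eLpNorm'' η hη ηinf hηinf).mpr hηL2)
    (tendsto_toLp_comp_of_lipschitzWith hlip _ (hloss hηinf) hηL2)
    ((Lp.tendsto_Lp_iff_tendsto_eLpNorm'' w hw winf hwinf).mpr hwL2) hrec
  rw [← MemLp.toLp_const_smul, ← MemLp.toLp_neg, ← MemLp.toLp_add, MemLp.toLp_eq_toLp_iff] at hfix
  filter_upwards [hfix] with ω hω
  simpa using hω

theorem stmt17 {Ω : Type*} [MeasurableSpace Ω] (P : Measure Ω) [IsProbabilityMeasure P]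
    (wstar z y w0 : Ω → ℝ) (η w : ℕ → Ω → ℝ)
    (hwstar : MemLp wstar 2 P) (hz : MemLp z 2 P) (hy : MemLp y 2 P)
    (hw0 : MemLp w0 2 P) (hη : ∀ t, MemLp (η t) 2 P) (hw : ∀ t, MemLp (w t) 2 P)
    (ℓ : ℝ → ℝ → ℝ → ℝ) (K : ℝ≥0)
    (hℓ : LipschitzWith K (fun p : ℝ × ℝ × ℝ => ℓ p.1 p.2.1 p.2.2))
    (𝒯 : ℝ → ℝ) (h𝒯m : Measurable 𝒯) (B : ℝ) (h𝒯b : ∀ x, |𝒯 x| ≤ B)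
    (Rθ : ℕ → ℕ → ℝ) (Rd : ℕ → ℝ)
    (heq : ∀ t : ℕ, ∀ᵐ ω ∂P,
      η t ω = -(∑ s ∈ Finset.range t, ℓ (η s ω) (wstar ω) (z ω) * Rθ t s)
        + 𝒯 (y ω) * w0 ω * Rd t + w t ω)
    (ηinf winf : Ω → ℝ) (hηinf : MemLp ηinf 2 P) (hwinf : MemLp winf 2 P)
    (C c : ℝ) (hC : 0 < C) (hc : 0 < c)
    (hηconv : ∀ t : ℕ, eLpNorm (fun ω => η t ω - ηinf ω) 2 P
      ≤ ENNReal.ofReal (C * Real.exp (-c * t)))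
    (hwconv : ∀ t : ℕ, eLpNorm (fun ω => w t ω - winf ω) 2 P
      ≤ ENNReal.ofReal (C * Real.exp (-c * t)))
    (hRd : Tendsto Rd atTop (nhds 0))
    (hRθbound : ∀ t s : ℕ, 1 ≤ s → |Rθ (t + s) t| ≤ C * Real.exp (-c * s))
    (Rlim : ℕ → ℝ)
    (hRθlim : ∀ s : ℕ, 1 ≤ s →
      Tendsto (fun t => Rθ (t + s) t) atTop (nhds (Rlim s))) :
    Summable (fun s : ℕ => |Rlim (s + 1)|) ∧
      ∀ᵐ ω ∂P, ηinf ω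
        = -(∑' s : ℕ, Rlim (s + 1)) * ℓ (ηinf ω) (wstar ω) (z ω) + winf ω :=
  stmt17_general P wstar z y w0 η w hwstar hz hy hw0 hη hw ℓ K hℓ 𝒯 h𝒯m B h𝒯b Rθ Rd heq ηinf winf
    hηinf hwinf C c hc hηconv hwconv hRd hRθbound Rlim hRθlim
end
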